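/- arXiv:2506.22306 — 2 statements merged into one kernel-verified Lean document; each statement's English description precedes it below -/
import Mathlib

section
/- Let T be a rectangular standard Young tableau written as the horizontal concatenation T = T_1 S T_2, where S is a uniformly proper rectangular subtableau and T_1 is nonempty. During jeu de taquin promotion of T, the sliding path of the empty box moves only horizontally within S; i.e., whenever the empty box occupies a position inside S (other than at the right boundary of its row of S), the next slide moves the entry to its right leftward, never the entry below upward. -/
/-- `T` (as a function `ℕ → ℕ → ℕ`, row-column indexed from `0`) is a rectangular
standard Young tableau with `r` rows, `c` columns and content `{1,…,r*c}` :
rows strictly increase left-to-right, columns strictly increase top-to-bottom. -/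
def IsRectSYT (r c : ℕ) (T : ℕ → ℕ → ℕ) : Prop :=
  (∀ i j, i < r → j + 1 < c → T i j < T i (j + 1)) ∧
  (∀ i j, i + 1 < r → j < c → T i j < T (i + 1) j) ∧
  (∀ i j, i < r → j < c → 1 ≤ T i j ∧ T i j ≤ r * c) ∧
  (∀ v, 1 ≤ v → v ≤ r * c → ∃ i j, i < r ∧ j < c ∧ T i j = v)

/-- One step of the jeu de taquin slide of the empty box at position `p` in an
`r × c` rectangular tableau: slide the right neighbour `b` left if `b < a` (entries
being distinct, `≤` and `<` agree), else slide the lower neighbour `a` up. -/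
def slideNext (r c : ℕ) (T : ℕ → ℕ → ℕ) (p : ℕ × ℕ) : ℕ × ℕ :=
  if p.1 + 1 < r ∧ p.2 + 1 < c then
    (if T p.1 (p.2 + 1) ≤ T (p.1 + 1) p.2 then (p.1, p.2 + 1) else (p.1 + 1, p.2))
  else if p.2 + 1 < c then (p.1, p.2 + 1)
  else if p.1 + 1 < r then (p.1 + 1, p.2)
  else p

/-- The sliding path of the empty box during promotion, starting in the top-left
corner; the path stabilizes once the empty box has nothing below or to its right. -/
def slidePath (r c : ℕ) (T : ℕ → ℕ → ℕ) : ℕ → ℕ × ℕ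
  | 0 => (0, 0)
  | k + 1 => slideNext r c T (slidePath r c T k)

open Classical in
/-- Jeu de taquin promotion of a rectangular standard Young tableau: erase the entry
`1` in the top-left corner, slide along the sliding path, decrement all entries by `1`
and put `r*c` in the final empty box. -/
noncomputable def promote (r c : ℕ) (T : ℕ → ℕ → ℕ) : ℕ → ℕ → ℕ := fun i j =>
  if (i, j) = slidePath r c T (r + c) then r * c
  else if h : ∃ k, slidePath r c T k = (i, j) then
    T (slidePath r c T (Nat.find h + 1)).1 (slidePath r c T (Nat.find h + 1)).2 - 1
  else T i j - 1

/-!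
Entries of `T₁` are at most `k`, entries of `S` lie in `(k, k + r w]` and entries of `T₂` exceed
`k + r w`. If row `i + 1` of `S` starts strictly left of row `i`, then in row `i` of `S` the entry
to the right of the empty box is smaller than the entry below it (by column strictness of `S`, or
because it is compared with an entry of `T₂`), so the box slides right. If row `i + 1` of `S`
starts in the same column as row `i`, the empty box never reaches the interior of row `i` of `S`:
it cannot enter it from `T₁`, whose entry below is smaller than the entry of `S` on the right,
and it can only come down into it from a box of row `i - 1` that is again of this aligned kind.
-/

namespace IsRectSYT

variable {r c : ℕ} {T : ℕ → ℕ → ℕ}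

theorem row_strictMono (hT : IsRectSYT r c T) {i j j' : ℕ} (hi : i < r) (hjj' : j < j')
    (hj' : j' < c) : T i j < T i j' := by
  induction hjj' with
  | refl => exact hT.1 i j hi hj'
  | step _ ih => exact (ih (by omega)).trans (hT.1 i _ hi hj')

theorem row_mono (hT : IsRectSYT r c T) {i j j' : ℕ} (hi : i < r) (hjj' : j ≤ j')
    (hj' : j' < c) : T i j ≤ T i j' := by
  rcases hjj'.eq_or_lt with rfl | hlt
  · rfl
  · exact (hT.row_strictMono hi hlt hj').le

theorem injOn (hT : IsRectSYT r c T) :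
    Set.InjOn (fun p : ℕ × ℕ => T p.1 p.2) (Finset.range r ×ˢ Finset.range c : Finset _) := by
  apply Finset.injOn_of_surjOn_of_card_le (t := Finset.Icc 1 (r * c))
  · rintro ⟨i, j⟩ hp
    simp only [Finset.coe_product, Finset.coe_range, Set.mem_prod, Set.mem_Iio] at hp
    simpa using hT.2.2.1 i j hp.1 hp.2
  · intro v hv
    simp only [Finset.coe_Icc, Set.mem_Icc] at hv
    obtain ⟨i, j, hi, hj, rfl⟩ := hT.2.2.2 v hv.1 hv.2
    exact ⟨(i, j), by simp [hi, hj], rfl⟩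
  · simp

theorem eq_of_apply_eq (hT : IsRectSYT r c T) {i j i' j' : ℕ} (hi : i < r) (hj : j < c)
    (hi' : i' < r) (hj' : j' < c) (h : T i j = T i' j') : (i, j) = (i', j') :=
  hT.injOn (by simp [hi, hj]) (by simp [hi', hj']) h

end IsRectSYT

structure IsProperSubtableau (r c w k : ℕ) (T : ℕ → ℕ → ℕ) (s : ℕ → ℕ) : Prop where
  fit : ∀ i, i < r → s i + w ≤ c
  antitone : ∀ i, i + 1 < r → s (i + 1) ≤ s i
  content : ∀ v, (k < v ∧ v ≤ k + r * w) ↔ ∃ i j, i < r ∧ j < w ∧ T i (s i + j) = v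
  col : ∀ i j, i + 1 < r → j < w → T i (s i + j) < T (i + 1) (s (i + 1) + j)

namespace IsProperSubtableau

variable {r c w k : ℕ} {T : ℕ → ℕ → ℕ} {s : ℕ → ℕ}

theorem mem_content (hS : IsProperSubtableau r c w k T s) {i a : ℕ} (hi : i < r) (ha : a < w) :
    k < T i (s i + a) ∧ T i (s i + a) ≤ k + r * w :=
  (hS.content _).2 ⟨i, a, hi, ha, rfl⟩

theorem not_mem_content_of_outside (hT : IsRectSYT r c T) (hS : IsProperSubtableau r c w k T s)
    {i j : ℕ} (hi : i < r) (hj : j < c) (hout : j < s i ∨ s i + w ≤ j) :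
    ¬ (k < T i j ∧ T i j ≤ k + r * w) := by
  intro hmem
  obtain ⟨i', a, hi', ha, heq⟩ := (hS.content _).1 hmem
  have hfit := hS.fit i' hi'
  obtain ⟨rfl, rfl⟩ := Prod.mk.inj (hT.eq_of_apply_eq hi' (by omega) hi hj heq)
  omega

theorem le_of_lt_left (hT : IsRectSYT r c T) (hS : IsProperSubtableau r c w k T s) (hw : 0 < w)
    {i j : ℕ} (hi : i < r) (hj : j < s i) : T i j ≤ k := by
  have hfit := hS.fit i hi
  have hle : T i j ≤ T i (s i + 0) := hT.row_mono hi (by omega) (by omega)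
  have hS0 := (hS.mem_content hi hw).2
  by_contra hk
  exact hS.not_mem_content_of_outside hT hi (by omega) (.inl hj) ⟨by omega, by omega⟩

theorem le_of_lt_right (hT : IsRectSYT r c T) (hS : IsProperSubtableau r c w k T s) (hw : 0 < w)
    {i j : ℕ} (hi : i < r) (hj : j < s i + w) : T i j ≤ k + r * w := by
  have hfit := hS.fit i hi
  have hle : T i j ≤ T i (s i + (w - 1)) := hT.row_mono hi (by omega) (by omega)
  exact hle.trans (hS.mem_content hi (by omega)).2

theorem lt_of_right_le (hT : IsRectSYT r c T) (hS : IsProperSubtableau r c w k T s) (hw : 0 < w)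
    {i j : ℕ} (hi : i < r) (hj : s i + w ≤ j) (hjc : j < c) : k + r * w < T i j := by
  have hle : T i (s i + (w - 1)) ≤ T i j := hT.row_mono hi (by omega) hjc
  have hlast := (hS.mem_content hi (show w - 1 < w by omega)).1
  by_contra hk
  exact hS.not_mem_content_of_outside hT hi hjc (.inr hj) ⟨by omega, by omega⟩

theorem right_le_below (hT : IsRectSYT r c T) (hS : IsProperSubtableau r c w k T s)
    (hw : 0 < w) {i j : ℕ} (hi : i + 1 < r) (hshift : s (i + 1) < s i) (hj : s (i + 1) ≤ j)
    (hjw : j + 1 < s i + w) : T i (j + 1) ≤ T (i + 1) j := by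
  have hfit := hS.fit i (by omega)
  rcases lt_or_ge j (s (i + 1) + w) with hjS | hjS
  · obtain ⟨a, rfl⟩ := Nat.exists_eq_add_of_le hj
    calc T i (s (i + 1) + a + 1) ≤ T i (s i + a) := hT.row_mono (by omega) (by omega) (by omega)
      _ ≤ T (i + 1) (s (i + 1) + a) := (hS.col i a hi (by omega)).le
  · calc T i (j + 1) ≤ k + r * w := hS.le_of_lt_right hT hw (by omega) hjw
      _ ≤ T (i + 1) j := (hS.lt_of_right_le hT hw hi hjS (by omega)).le

end IsProperSubtableau

section Sliding

variable {r c : ℕ} {T : ℕ → ℕ → ℕ}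

theorem slideNext_eq_right {i j : ℕ} (hj : j + 1 < c)
    (hle : i + 1 < r → T i (j + 1) ≤ T (i + 1) j) : slideNext r c T (i, j) = (i, j + 1) := by
  unfold slideNext
  split_ifs <;> simp_all

theorem slideNext_eq_self_or_right_or_down (p : ℕ × ℕ) :
    slideNext r c T p = p ∨
      (slideNext r c T p = (p.1, p.2 + 1) ∧ (p.1 + 1 < r → T p.1 (p.2 + 1) ≤ T (p.1 + 1) p.2)) ∨
      (slideNext r c T p = (p.1 + 1, p.2) ∧ (p.2 + 1 < c → T (p.1 + 1) p.2 < T p.1 (p.2 + 1))) := by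
  unfold slideNext
  split_ifs <;> simp_all

end Sliding

def AlignedInterior (r w : ℕ) (s : ℕ → ℕ) (p : ℕ × ℕ) : Prop :=
  p.1 + 1 < r ∧ s (p.1 + 1) = s p.1 ∧ s p.1 ≤ p.2 ∧ p.2 + 1 < s p.1 + w

namespace IsProperSubtableau

variable {r c w k : ℕ} {T : ℕ → ℕ → ℕ} {s : ℕ → ℕ}

theorem alignedInterior_of_slideNext (hT : IsRectSYT r c T) (hS : IsProperSubtableau r c w k T s)
    (p : ℕ × ℕ) (h : AlignedInterior r w s (slideNext r c T p)) : AlignedInterior r w s p := by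
  obtain ⟨i, j⟩ := p
  dsimp only [AlignedInterior]
  rcases slideNext_eq_self_or_right_or_down (r := r) (c := c) (T := T) (i, j) with
    hstay | ⟨hright, hright_wins⟩ | ⟨hdown, hdown_wins⟩
  · rwa [hstay] at h
  · rw [hright] at h
    obtain ⟨hi, hal, hsj, hjw⟩ := h
    dsimp only at hi hal hsj hjw hright_wins
    rcases (show s i ≤ j ∨ j + 1 = s i by omega) with hj | hj
    · exact ⟨hi, hal, hj, by omega⟩
    · -- the box would enter `S` from `T₁`, whose entry below it is smaller than `S`'s entry
      exfalso
      have hT₁ := hS.le_of_lt_left hT (by omega) hi (show j < s (i + 1) by omega)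
      have hS₀ := (hS.mem_content (i := i) (a := 0) (by omega) (by omega)).1
      rw [Nat.add_zero, ← hj] at hS₀
      exact absurd (hright_wins hi) (by omega)
  · rw [hdown] at h
    obtain ⟨hi, hal, hsj, hjw⟩ := h
    dsimp only at hi hal hsj hjw hdown_wins
    have hfit := hS.fit (i + 1) (by omega)
    rcases (hS.antitone i (by omega)).lt_or_eq with hshift | heq
    · have hright_le := hS.right_le_below hT (by omega) (by omega) hshift hsj (by omega)
      exact absurd (hdown_wins (by omega)) (by omega)
    · exact ⟨by omega, heq, by omega, by omega⟩

theorem not_alignedInterior_slidePath (hT : IsRectSYT r c T)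
    (hS : IsProperSubtableau r c w k T s) (hT₁ : 0 < s 0) (m : ℕ) :
    ¬ AlignedInterior r w s (slidePath r c T m) := by
  induction m with
  | zero =>
    rintro ⟨-, -, h, -⟩
    exact absurd h (by simpa [slidePath] using hT₁.ne')
  | succ m ih => exact fun h => ih (hS.alignedInterior_of_slideNext hT _ h)

end IsProperSubtableau

theorem sliding_path_horizontal_in_subtableau_general (r c w k : ℕ) (T : ℕ → ℕ → ℕ) (s : ℕ → ℕ)
    (hT : IsRectSYT r c T)
    (hfit : ∀ i, i < r → s i + w ≤ c)
    (hmono : ∀ i, i + 1 < r → s (i + 1) ≤ s i)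
    (hT1 : 0 < s 0)
    (hcontent : ∀ v, (k < v ∧ v ≤ k + r * w) ↔ ∃ i j, i < r ∧ j < w ∧ T i (s i + j) = v)
    (hcol : ∀ i j, i + 1 < r → j < w → T i (s i + j) < T (i + 1) (s (i + 1) + j)) :
    ∀ m i j, slidePath r c T m = (i, j) → i < r → s i ≤ j → j + 1 < s i + w →
      slidePath r c T (m + 1) = (i, j + 1) := by
  have hS : IsProperSubtableau r c w k T s := ⟨hfit, hmono, hcontent, hcol⟩
  intro m i j hm hi hsj hjw
  have hjc : j + 1 < c := by have := hfit i hi; omega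
  rw [slidePath, hm]
  refine slideNext_eq_right hjc fun hi' => ?_
  rcases (hmono i hi').lt_or_eq with hshift | haligned
  · exact hS.right_le_below hT (by omega) hi' hshift (by omega) hjw
  · exact absurd (hm ▸ ⟨hi', haligned, hsj, hjw⟩) (hS.not_alignedInterior_slidePath hT hT1 m)

/-- During jeu de taquin promotion of `T = T₁ S T₂` (with `S` a uniformly proper
rectangular subtableau occupying columns `s i, …, s i + w - 1` of each row `i`,
and `T₁` nonempty), the sliding path of the empty box moves only horizontally
within `S` : whenever the empty box occupies a position of `S` other than the right
boundary of its row of `S`, the next slide moves the entry to its right leftward. -/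
theorem sliding_path_horizontal_in_subtableau (r c w k : ℕ) (T : ℕ → ℕ → ℕ) (s : ℕ → ℕ)
    (hr : 0 < r) (hT : IsRectSYT r c T)
    (hw : 0 < w) (hwc : w < c)
    (hfit : ∀ i, i < r → s i + w ≤ c)
    (hmono : ∀ i, i + 1 < r → s (i + 1) ≤ s i)
    (hT1 : 0 < s 0)
    (hcontent : ∀ v, (k < v ∧ v ≤ k + r * w) ↔ ∃ i j, i < r ∧ j < w ∧ T i (s i + j) = v)
    (hcol : ∀ i j, i + 1 < r → j < w → T i (s i + j) < T (i + 1) (s (i + 1) + j)) :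
    ∀ m i j, slidePath r c T m = (i, j) → i < r → s i ≤ j → j + 1 < s i + w →
      slidePath r c T (m + 1) = (i, j + 1) :=
  sliding_path_horizontal_in_subtableau_general r c w k T s hT hfit hmono hT1 hcontent hcol
end

section
/- Let T be a rectangular standard Young tableau. If C is a uniform sub-diagram of the m-diagram φ(T) whose set of endpoints does not contain the vertex 1, then the rotation ρ(C) (shifting all endpoints down by 1) is a uniform sub-diagram of φ(P(T)). -/
/-- The greedy matching between rows `i` and `i+1` of `T` : the list whose `j`-th item
is the column (in row `i`) matched to column `j` of row `i+1`, namely the largest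
column `j'` of row `i` with `T i j' ≤ T (i+1) j` that is not already matched. -/
def partnerList (c : ℕ) (T : ℕ → ℕ → ℕ) (i : ℕ) : ℕ → List ℕ
  | 0 => []
  | j + 1 =>
    let prev := partnerList c T i j
    prev ++ [((List.range c).filter
      (fun j' => decide (T i j' ≤ T (i + 1) j ∧ j' ∉ prev))).foldr max 0]

/-- The column of row `i` matched to column `j` of row `i+1` by the greedy algorithm. -/
def partnerCol (c : ℕ) (T : ℕ → ℕ → ℕ) (i j : ℕ) : ℕ :=
  (partnerList c T i (j + 1)).getD j 0

/-- The m-diagram `φ(T)` of an `r × c` rectangular standard Young tableau: the union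
over `0 ≤ i ≤ r-2` of the arcs `(T i (partnerCol c T i j), T (i+1) j)` of the greedy
matchings between consecutive rows. -/
def mDiagram (r c : ℕ) (T : ℕ → ℕ → ℕ) : Finset (ℕ × ℕ) :=
  ((Finset.range (r - 1)) ×ˢ (Finset.range c)).image
    (fun p => (T p.1 (partnerCol c T p.1 p.2), T (p.1 + 1) p.2))

/-- The set of endpoints of a collection of arcs. -/
def endpoints (C : Finset (ℕ × ℕ)) : Finset ℕ := C.image Prod.fst ∪ C.image Prod.snd

/-- Two arcs share an endpoint. -/
def SharesEndpoint (p q : ℕ × ℕ) : Prop :=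
  p.1 = q.1 ∨ p.1 = q.2 ∨ p.2 = q.1 ∨ p.2 = q.2

/-- Two arcs cross. -/
def Crosses (p q : ℕ × ℕ) : Prop :=
  (p.1 < q.1 ∧ q.1 < p.2 ∧ p.2 < q.2) ∨ (q.1 < p.1 ∧ p.1 < q.2 ∧ q.2 < p.2)

/-- `C` is a nonempty subcollection of `M` closed under sharing endpoints, such that
no arc of `M` outside `C` crosses an arc of `C`. -/
def IsPreSubdiagram (M C : Finset (ℕ × ℕ)) : Prop :=
  C ⊆ M ∧ C.Nonempty ∧
  (∀ p ∈ M, ∀ q ∈ C, SharesEndpoint p q → p ∈ C) ∧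
  (∀ p ∈ M, p ∉ C → ∀ q ∈ C, ¬ Crosses p q)

/-- `C` is a sub-diagram of `M` : a nonempty **proper** subcollection closed under
sharing endpoints and not crossed from outside. -/
def IsSubdiagram (M C : Finset (ℕ × ℕ)) : Prop := IsPreSubdiagram M C ∧ C ≠ M

/-- `C` is a component of `M` : it satisfies the closure conditions and has no proper
subcollection forming a sub-diagram of `M`. -/
def IsComponent (M C : Finset (ℕ × ℕ)) : Prop :=
  IsPreSubdiagram M C ∧ ∀ C', C' ⊂ C → ¬ IsSubdiagram M C'

/-- A collection of arcs is uniform if its endpoints are consecutive integers. -/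
def IsUniform (C : Finset (ℕ × ℕ)) : Prop := ∃ a b, endpoints C = Finset.Icc a b

/-- `ρ` on `{1,…,n}` : `i ↦ i-1 mod n`, with representatives in `{1,…,n}`. -/
def rotIdx (n i : ℕ) : ℕ := if i = 1 then n else i - 1

/-- Rotation of an arc, reordered so the smaller endpoint comes first. -/
def rotArc (n : ℕ) (p : ℕ × ℕ) : ℕ × ℕ :=
  (min (rotIdx n p.1) (rotIdx n p.2), max (rotIdx n p.1) (rotIdx n p.2))

/-- `d`-fold rotation of a set of boundary points. -/
def rotSetPow (n d : ℕ) (S : Finset ℕ) : Finset ℕ := S.image ((rotIdx n)^[d])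

/-- The partition of the boundary `{1,…,r*c}` induced by the endpoint sets of the
components of `φ(T)` is invariant under `d`-fold rotation. -/
def RotSym (r c : ℕ) (T : ℕ → ℕ → ℕ) (d : ℕ) : Prop :=
  {A : Finset ℕ | ∃ C, IsComponent (mDiagram r c T) C ∧ A = rotSetPow (r * c) d (endpoints C)}
    = {A : Finset ℕ | ∃ C, IsComponent (mDiagram r c T) C ∧ A = endpoints C}

/-!
Let `[a, b]` be the set of endpoints of `C`; then `2 ≤ a`, and an arc of `φ(T)` with one
endpoint in `[a, b]` has both there. The jeu de taquin path of promotion never slides down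
onto an entry of `[a, b]`: at a first such step, from `(i, j)` to `(i + 1, j)`, row `i + 1`
would have more entries in `[a, T (i + 1) j]` than row `i`, although the greedy matching sends
them injectively into row `i` within that range. So promotion turns each entry `v ∈ [a, b]`
into `v - 1` in the same row. The greedy matching is characterised by a ballot condition on
the entries lying between the two endpoints of an arc, and for the arcs meeting `[a, b]` only
entries of `[a, b]` enter it. Hence the arcs of `φ(P(T))` meeting `[a - 1, b - 1]` are exactly
the arcs of `C` shifted down by one, which is `ρ(C)` since `1 ∉ [a, b]`.
-/

def IsStandardRowPair (c : ℕ) (T : ℕ → ℕ → ℕ) (i : ℕ) : Prop :=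
  StrictMonoOn (T i) (Set.Iio c) ∧ StrictMonoOn (T (i + 1)) (Set.Iio c) ∧
    (∀ t < c, T i t < T (i + 1) t) ∧ ∀ t < c, ∀ t' < c, T i t ≠ T (i + 1) t'

def rowCount (c : ℕ) (f : ℕ → ℕ) (x v : ℕ) : ℕ :=
  ((Finset.range c).filter (fun t => x < f t ∧ f t ≤ v)).card

/-- The ballot description of the greedy matching: `(x, y)` is an arc between rows `i` and
`i + 1` exactly when it is balanced (`isBalanced_partnerCol`, `IsBalanced.unique`). -/
def IsBalanced (c : ℕ) (T : ℕ → ℕ → ℕ) (i x y : ℕ) : Prop :=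
  x < y ∧ rowCount c (T i) x (y - 1) = rowCount c (T (i + 1)) x (y - 1) ∧
    ∀ v < y, rowCount c (T (i + 1)) x v ≤ rowCount c (T i) x v

lemma rowCount_add {c : ℕ} (f : ℕ → ℕ) {x w v : ℕ} (hxw : x ≤ w) (hwv : w ≤ v) :
    rowCount c f x w + rowCount c f w v = rowCount c f x v := by
  unfold rowCount
  rw [← Finset.card_union_of_disjoint (Finset.disjoint_filter.2 fun _ _ h h' => by omega)]
  congr 1
  ext t
  simp only [Finset.mem_union, Finset.mem_filter, Finset.mem_range]
  omega

lemma rowCount_eq_card_filter_Ioc {c : ℕ} {f : ℕ → ℕ} (hf : Set.InjOn f (Set.Iio c)) (x v : ℕ) :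
    rowCount c f x v = ((Finset.Ioc x v).filter fun u => ∃ t < c, f t = u).card := by
  rw [rowCount, ← Finset.card_image_of_injOn (hf.mono fun t ht => by simp_all)]
  congr 1
  ext u
  simp only [Finset.mem_image, Finset.mem_filter, Finset.mem_range, Finset.mem_Ioc]
  constructor
  · rintro ⟨t, ⟨ht, hx, hv⟩, rfl⟩; exact ⟨⟨hx, hv⟩, t, ht, rfl⟩
  · rintro ⟨⟨hx, hv⟩, t, ht, rfl⟩; exact ⟨t, ⟨ht, hx, hv⟩, rfl⟩

section Matching

variable {c : ℕ} {T : ℕ → ℕ → ℕ} {i : ℕ}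

lemma partnerList_length (j : ℕ) : (partnerList c T i j).length = j := by
  induction j with
  | zero => rfl
  | succ j ih => simp [partnerList, ih]

lemma partnerCol_eq_foldr (j : ℕ) :
    partnerCol c T i j = ((List.range c).filter
      (fun j' => decide (T i j' ≤ T (i + 1) j ∧ j' ∉ partnerList c T i j))).foldr max 0 := by
  simp [partnerCol, partnerList, partnerList_length]

lemma partnerList_succ (j : ℕ) :
    partnerList c T i (j + 1) = partnerList c T i j ++ [partnerCol c T i j] := by
  rw [partnerCol_eq_foldr]; rfl

lemma mem_partnerList_iff {t j : ℕ} :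
    t ∈ partnerList c T i j ↔ ∃ m < j, partnerCol c T i m = t := by
  induction j with
  | zero => simp [partnerList]
  | succ j ih =>
    simp only [partnerList_succ, List.mem_append, List.mem_singleton, ih]
    constructor
    · rintro (⟨m, hm, rfl⟩ | rfl)
      exacts [⟨m, by omega, rfl⟩, ⟨j, by omega, rfl⟩]
    · rintro ⟨m, hm, rfl⟩
      rcases Nat.lt_succ_iff_lt_or_eq.1 hm with hm | rfl
      exacts [Or.inl ⟨m, hm, rfl⟩, Or.inr rfl]

variable (h : IsStandardRowPair c T i)
include h

lemma partnerCol_spec {j : ℕ} (hj : j < c) :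
    partnerCol c T i j < c ∧ partnerCol c T i j ∉ partnerList c T i j ∧
      T i (partnerCol c T i j) ≤ T (i + 1) j ∧
      ∀ t < c, T i t ≤ T (i + 1) j → t ∉ partnerList c T i j → t ≤ partnerCol c T i j := by
  classical
  set F := (List.range c).filter
    (fun j' => decide (T i j' ≤ T (i + 1) j ∧ j' ∉ partnerList c T i j))
  -- at most `j` of the `j + 1` columns `0, …, j` of row `i` are matched already
  have hcard : (partnerList c T i j).toFinset.card < (Finset.range (j + 1)).card := by
    have := List.toFinset_card_le (partnerList c T i j)
    rw [partnerList_length] at this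
    simp only [Finset.card_range]
    omega
  obtain ⟨t, ht, htl⟩ := Finset.exists_mem_notMem_of_card_lt_card hcard
  rw [Finset.mem_range] at ht
  have htF : t ∈ F := by
    refine List.mem_filter.2 ⟨List.mem_range.2 (by omega), decide_eq_true ⟨?_, by simpa using htl⟩⟩
    exact (h.1.monotoneOn (show t < c by omega) hj (by omega)).trans (h.2.2.1 j hj).le
  have hmax : F.foldr max 0 ∈ F := by
    rw [← Nat.bot_eq_zero]
    exact List.maximum_mem (List.foldr_max_of_ne_nil (List.ne_nil_of_mem htF)).symm
  rw [List.mem_filter, decide_eq_true_iff] at hmax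
  rw [partnerCol_eq_foldr]
  refine ⟨List.mem_range.1 hmax.1, hmax.2.2, hmax.2.1, fun t ht hle hnm => ?_⟩
  exact List.le_max_of_le' 0 (List.mem_filter.2 ⟨List.mem_range.2 ht, decide_eq_true ⟨hle, hnm⟩⟩)
    le_rfl

lemma partnerCol_lt {j : ℕ} (hj : j < c) : partnerCol c T i j < c :=
  (partnerCol_spec h hj).1

lemma partnerCol_val_lt {j : ℕ} (hj : j < c) : T i (partnerCol c T i j) < T (i + 1) j :=
  (partnerCol_spec h hj).2.2.1.lt_of_ne (h.2.2.2 _ (partnerCol_lt h hj) _ hj)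

lemma partnerCol_injOn : Set.InjOn (partnerCol c T i) (Set.Iio c) := by
  have key : ∀ {m j}, m < j → j < c → partnerCol c T i m ≠ partnerCol c T i j :=
    fun hm hj he => (partnerCol_spec h hj).2.1 (mem_partnerList_iff.2 ⟨_, hm, he⟩)
  intro m hm j hj he
  rcases lt_trichotomy m j with hmj | rfl | hjm
  exacts [absurd he (key hmj hj), rfl, absurd he.symm (key hjm hm)]

lemma le_partnerCol {j t : ℕ} (hj : j < c) (ht : t < c) (hle : T i t ≤ T (i + 1) j)
    (hfree : ∀ m < j, partnerCol c T i m ≠ t) : t ≤ partnerCol c T i j :=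
  (partnerCol_spec h hj).2.2.2 t ht hle fun hmem =>
    let ⟨m, hm, he⟩ := mem_partnerList_iff.1 hmem; hfree m hm he

lemma exists_partnerCol_eq {t : ℕ} (ht : t < c) : ∃ m < c, partnerCol c T i m = t := by
  obtain ⟨m, hm, he⟩ := Finset.surjOn_of_injOn_of_card_le (s := Finset.range c)
    (t := Finset.range c) (partnerCol c T i)
    (fun m hm => by simpa using partnerCol_lt h (Finset.mem_range.1 hm))
    (fun m hm j hj => partnerCol_injOn h (by simpa using hm) (by simpa using hj)) le_rfl
    (Finset.mem_range.2 ht)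
  exact ⟨m, Finset.mem_range.1 hm, he⟩

/-- `m ↦ partnerCol m` injects the closers in `(x, v]` into the openers in `(x, v]`. -/
lemma rowCount_succ_le_partnerCol {j v : ℕ} (hj : j < c) (hv : v < T (i + 1) j) :
    rowCount c (T (i + 1)) (T i (partnerCol c T i j)) v ≤
      rowCount c (T i) (T i (partnerCol c T i j)) v := by
  set x := T i (partnerCol c T i j)
  have hpj := partnerCol_lt h hj
  refine Finset.card_le_card_of_injOn (partnerCol c T i) (fun m hm => ?_)
    ((partnerCol_injOn h).mono fun m hm => by simp_all)
  simp only [Finset.coe_filter, Finset.mem_range, Set.mem_ofPred_eq] at hm ⊢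
  obtain ⟨hmc, hxm, hmv⟩ := hm
  have hmj : m < j := (h.2.1.lt_iff_lt hmc hj).1 (by omega)
  have hne : partnerCol c T i m ≠ partnerCol c T i j := fun he =>
    hmj.ne (partnerCol_injOn h hmc hj he)
  refine ⟨partnerCol_lt h hmc, ?_, (partnerCol_val_lt h hmc).le.trans hmv⟩
  by_contra hle
  -- otherwise `partnerCol j`, still free at time `m`, would have been chosen at time `m`
  have hlt : partnerCol c T i m < partnerCol c T i j :=
    (h.1.lt_iff_lt (partnerCol_lt h hmc) hpj).1
      (lt_of_le_of_ne (not_lt.1 hle) fun he => hne (h.1.injOn (partnerCol_lt h hmc) hpj he))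
  exact hlt.not_ge (le_partnerCol h hmc hpj hxm.le fun m' hm' he =>
    (hm'.trans hmj).ne (partnerCol_injOn h (show m' < c by omega) hj he))

/-- `partnerCol` maps the closers strictly between `x` and `y` onto the openers there. -/
lemma rowCount_le_rowCount_succ_partnerCol {j : ℕ} (hj : j < c) :
    rowCount c (T i) (T i (partnerCol c T i j)) (T (i + 1) j - 1) ≤
      rowCount c (T (i + 1)) (T i (partnerCol c T i j)) (T (i + 1) j - 1) := by
  set x := T i (partnerCol c T i j)
  have hpj := partnerCol_lt h hj
  refine Finset.card_le_card_of_surjOn (partnerCol c T i) fun t ht => ?_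
  simp only [Finset.coe_filter, Finset.mem_range, Set.mem_ofPred_eq, Set.mem_image] at ht ⊢
  obtain ⟨htc, hxt, hty⟩ := ht
  have hmem : t ∈ partnerList c T i j := by
    by_contra hfree
    have := (partnerCol_spec h hj).2.2.2 t htc (by omega) hfree
    exact (h.1.monotoneOn htc hpj this).not_gt hxt
  obtain ⟨m, hm, rfl⟩ := mem_partnerList_iff.1 hmem
  have hmc : m < c := hm.trans hj
  exact ⟨m, ⟨hmc, hxt.trans (partnerCol_val_lt h hmc), by have := h.2.1 hmc hj hm; omega⟩, rfl⟩

lemma isBalanced_partnerCol {j : ℕ} (hj : j < c) :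
    IsBalanced c T i (T i (partnerCol c T i j)) (T (i + 1) j) := by
  have hxy := partnerCol_val_lt h hj
  exact ⟨hxy, le_antisymm (rowCount_le_rowCount_succ_partnerCol h hj)
    (rowCount_succ_le_partnerCol h hj (by omega)), fun v hv => rowCount_succ_le_partnerCol h hj hv⟩

lemma IsBalanced.not_lt {x x' y : ℕ} (hx' : ∃ t < c, T i t = x')
    (hb : IsBalanced c T i x y) (hb' : IsBalanced c T i x' y) : ¬ x < x' := by
  intro hlt
  obtain ⟨t, htc, rfl⟩ := hx'
  obtain ⟨-, heq, hpre⟩ := hb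
  obtain ⟨hx'y, heq', -⟩ := hb'
  have hsplit := rowCount_add (c := c) (T i) hlt.le (show T i t ≤ y - 1 by omega)
  have hsplit' := rowCount_add (c := c) (T (i + 1)) hlt.le (show T i t ≤ y - 1 by omega)
  -- `T i t` is an opener but not a closer, so just below it the closers would win
  have hopen : rowCount c (T i) x (T i t - 1) < rowCount c (T i) x (T i t) := by
    refine Finset.card_lt_card (Finset.ssubset_iff_of_subset (fun s hs => ?_) |>.2 ⟨t, ?_, ?_⟩)
    all_goals simp only [Finset.mem_filter, Finset.mem_range] at *
    all_goals omega
  have hclose : rowCount c (T (i + 1)) x (T i t - 1) = rowCount c (T (i + 1)) x (T i t) := by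
    unfold rowCount
    congr 1
    refine Finset.filter_congr fun s hs => ?_
    have := h.2.2.2 t htc s (Finset.mem_range.1 hs)
    omega
  have := hpre (T i t - 1) (by omega)
  omega

lemma IsBalanced.unique {x x' y : ℕ} (hx : ∃ t < c, T i t = x) (hx' : ∃ t < c, T i t = x')
    (hb : IsBalanced c T i x y) (hb' : IsBalanced c T i x' y) : x = x' := by
  rcases lt_trichotomy x x' with hlt | heq | hlt
  exacts [(hb.not_lt h hx' hb' hlt).elim, heq, (hb'.not_lt h hx hb hlt).elim]

end Matching

namespace IsRectSYT

variable {r c : ℕ} {T : ℕ → ℕ → ℕ} (hT : IsRectSYT r c T)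
include hT

lemma strictMonoOn_row {i : ℕ} (hi : i < r) : StrictMonoOn (T i) (Set.Iio c) :=
  (strictMonoOn_Iic_of_lt_succ (n := c - 1) fun j hj => by
      simpa using hT.1 i j hi (by omega)).mono fun j hj => by
    simp only [Set.mem_Iio, Set.mem_Iic] at hj ⊢; omega

lemma strictMonoOn_col {j : ℕ} (hj : j < c) : StrictMonoOn (fun i => T i j) (Set.Iio r) :=
  (strictMonoOn_Iic_of_lt_succ (n := r - 1) fun i hi => by
      simpa using hT.2.1 i j (by omega) hj).mono fun i hi => by
    simp only [Set.mem_Iio, Set.mem_Iic] at hi ⊢; omega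

lemma lt_of_le_of_le {i j i' j' : ℕ} (hii : i ≤ i') (hjj : j ≤ j') (hne : (i, j) ≠ (i', j'))
    (hi' : i' < r) (hj' : j' < c) : T i j < T i' j' := by
  rcases hii.lt_or_eq with hii | rfl
  · exact ((hT.strictMonoOn_row (hii.trans hi')).monotoneOn (hjj.trans_lt hj') hj' hjj).trans_lt
      (hT.strictMonoOn_col hj' (hii.trans hi') hi' hii)
  · exact hT.strictMonoOn_row hi' (hjj.trans_lt hj') hj'
      (hjj.lt_of_ne fun h => hne (by rw [h]))

lemma inj {i j i' j' : ℕ} (hi : i < r) (hj : j < c) (hi' : i' < r) (hj' : j' < c)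
    (h : T i j = T i' j') : i = i' ∧ j = j' := by
  have hinj := Finset.injOn_of_surjOn_of_card_le (s := Finset.range r ×ˢ Finset.range c)
    (t := Finset.Icc 1 (r * c)) (fun p => T p.1 p.2)
    (fun p hp => by
      simp only [Finset.coe_product, Finset.coe_range, Set.mem_prod, Set.mem_Iio] at hp
      simpa using hT.2.2.1 p.1 p.2 hp.1 hp.2)
    (fun v hv => by
      simp only [Finset.coe_Icc, Set.mem_Icc] at hv
      obtain ⟨a, b, ha, hb, hab⟩ := hT.2.2.2 v hv.1 hv.2
      exact ⟨(a, b), by simp [ha, hb], hab⟩)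
    (by simp)
  simpa using @hinj (i, j) (by simp [hi, hj]) (i', j') (by simp [hi', hj']) h

lemma one_le {i j : ℕ} (hi : i < r) (hj : j < c) : 1 ≤ T i j := (hT.2.2.1 i j hi hj).1

lemma le_card {i j : ℕ} (hi : i < r) (hj : j < c) : T i j ≤ r * c := (hT.2.2.1 i j hi hj).2

lemma zero_zero (hr : 0 < r) (hc : 0 < c) : T 0 0 = 1 := by
  obtain ⟨i, j, hi, hj, hv⟩ := hT.2.2.2 1 le_rfl (Nat.mul_pos hr hc)
  by_contra hne
  have := hT.lt_of_le_of_le (Nat.zero_le i) (Nat.zero_le j)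
    (fun he => by simp only [Prod.mk.injEq] at he; obtain ⟨rfl, rfl⟩ := he; exact hne hv) hi hj
  have := hT.one_le hr hc
  omega

lemma corner (hr : 0 < r) (hc : 0 < c) : T (r - 1) (c - 1) = r * c := by
  obtain ⟨i, j, hi, hj, hv⟩ := hT.2.2.2 (r * c) (Nat.mul_pos hr hc) le_rfl
  by_contra hne
  have := hT.lt_of_le_of_le (i := i) (j := j) (i' := r - 1) (j' := c - 1) (by omega) (by omega)
    (fun he => by simp only [Prod.mk.injEq] at he; obtain ⟨rfl, rfl⟩ := he; exact hne hv)
    (by omega) (by omega)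
  have := hT.le_card (i := r - 1) (j := c - 1) (by omega) (by omega)
  omega

lemma isStandardRowPair {i : ℕ} (hi : i + 1 < r) : IsStandardRowPair c T i :=
  ⟨hT.strictMonoOn_row (by omega), hT.strictMonoOn_row hi, fun t ht => hT.2.1 i t hi ht,
    fun t ht t' ht' he => by have := (hT.inj (i' := i + 1) (by omega) ht hi ht' he).1; omega⟩

end IsRectSYT

section MDiagram

variable {r c : ℕ} {T : ℕ → ℕ → ℕ}

lemma mem_mDiagram {p : ℕ × ℕ} :
    p ∈ mDiagram r c T ↔ ∃ i < r - 1, ∃ m < c, (T i (partnerCol c T i m), T (i + 1) m) = p := by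
  simp [mDiagram, and_assoc]

variable (hT : IsRectSYT r c T)
include hT

lemma fst_lt_snd_of_mem_mDiagram {p : ℕ × ℕ} (hp : p ∈ mDiagram r c T) : p.1 < p.2 := by
  obtain ⟨i, hi, m, hm, rfl⟩ := mem_mDiagram.1 hp
  exact partnerCol_val_lt (hT.isStandardRowPair (by omega)) hm

lemma exists_mem_mDiagram_fst_eq {i t : ℕ} (hi : i < r - 1) (ht : t < c) :
    ∃ p ∈ mDiagram r c T, p.1 = T i t := by
  obtain ⟨m, hm, rfl⟩ := exists_partnerCol_eq (hT.isStandardRowPair (i := i) (by omega)) ht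
  exact ⟨_, mem_mDiagram.2 ⟨i, hi, m, hm, rfl⟩, rfl⟩

lemma eq_of_mem_mDiagram_of_fst_eq {p q : ℕ × ℕ} (hp : p ∈ mDiagram r c T)
    (hq : q ∈ mDiagram r c T) (h : p.1 = q.1) : p = q := by
  obtain ⟨i, hi, m, hm, rfl⟩ := mem_mDiagram.1 hp
  obtain ⟨i', hi', m', hm', rfl⟩ := mem_mDiagram.1 hq
  have hP := hT.isStandardRowPair (i := i) (by omega)
  obtain ⟨rfl, hpc⟩ := hT.inj (by omega) (partnerCol_lt hP hm) (by omega)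
    (partnerCol_lt (hT.isStandardRowPair (i := i') (by omega)) hm') h
  rw [partnerCol_injOn hP hm hm' hpc]

lemma eq_of_mem_mDiagram_of_snd_eq {p q : ℕ × ℕ} (hp : p ∈ mDiagram r c T)
    (hq : q ∈ mDiagram r c T) (h : p.2 = q.2) : p = q := by
  obtain ⟨i, hi, m, hm, rfl⟩ := mem_mDiagram.1 hp
  obtain ⟨i', hi', m', hm', rfl⟩ := mem_mDiagram.1 hq
  obtain ⟨hii, rfl⟩ := hT.inj (by omega) hm (by omega) hm' h
  obtain rfl : i = i' := by omega
  rfl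

end MDiagram

section Promotion

variable {r c : ℕ} {T : ℕ → ℕ → ℕ}

lemma slideNext_cases (p : ℕ × ℕ) :
    (slideNext r c T p = (p.1, p.2 + 1) ∧ p.2 + 1 < c ∧
        (p.1 + 1 < r → T p.1 (p.2 + 1) ≤ T (p.1 + 1) p.2)) ∨
      (slideNext r c T p = (p.1 + 1, p.2) ∧ p.1 + 1 < r ∧
        (p.2 + 1 < c → T (p.1 + 1) p.2 < T p.1 (p.2 + 1))) ∨
      (slideNext r c T p = p ∧ r ≤ p.1 + 1 ∧ c ≤ p.2 + 1) := by
  unfold slideNext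
  split_ifs <;> simp_all

open Classical in
/-- The box whose entry slides into box `p` during promotion. -/
noncomputable def slideSource (r c : ℕ) (T : ℕ → ℕ → ℕ) (p : ℕ × ℕ) : ℕ × ℕ :=
  if h : ∃ k, slidePath r c T k = p then slidePath r c T (Nat.find h + 1) else p

noncomputable def slideEntry (r c : ℕ) (T : ℕ → ℕ → ℕ) (i j : ℕ) : ℕ :=
  T (slideSource r c T (i, j)).1 (slideSource r c T (i, j)).2

lemma slideSource_of_forall_ne {p : ℕ × ℕ} (hp : ∀ k, slidePath r c T k ≠ p) :
    slideSource r c T p = p := by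
  rw [slideSource, dif_neg (not_exists.2 hp)]

variable (hr : 0 < r) (hc : 0 < c)
include hr hc

lemma slidePath_spec (k : ℕ) : (slidePath r c T k).1 < r ∧ (slidePath r c T k).2 < c ∧
    (slidePath r c T k).1 + (slidePath r c T k).2 = min k (r + c - 2) := by
  induction k with
  | zero => simp [slidePath, hr, hc]
  | succ k ih =>
    rcases slideNext_cases (r := r) (c := c) (T := T) (slidePath r c T k) with
      ⟨he, h, -⟩ | ⟨he, h, -⟩ | ⟨he, h, h'⟩ <;>
    simp only [slidePath, he] <;> omega

lemma slidePath_of_le {k : ℕ} (hk : r + c - 2 ≤ k) : slidePath r c T k = (r - 1, c - 1) := by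
  obtain ⟨h1, h2, h3⟩ := slidePath_spec (T := T) hr hc k
  ext <;> simp only <;> omega

lemma slidePath_ne_corner {k : ℕ} (hk : k < r + c - 2) : slidePath r c T k ≠ (r - 1, c - 1) := by
  intro he
  have := (slidePath_spec (T := T) hr hc k).2.2
  rw [he] at this
  omega

lemma slidePath_succ_cases {k i j : ℕ} (hk : k < r + c - 2) (hp : slidePath r c T k = (i, j)) :
    (slidePath r c T (k + 1) = (i, j + 1) ∧ j + 1 < c ∧ (i + 1 < r → T i (j + 1) ≤ T (i + 1) j)) ∨
      (slidePath r c T (k + 1) = (i + 1, j) ∧ i + 1 < r ∧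
        (j + 1 < c → T (i + 1) j < T i (j + 1))) := by
  have hspec := (slidePath_spec (T := T) hr hc k).2.2
  rw [hp] at hspec
  simp only [slidePath, hp]
  rcases slideNext_cases (r := r) (c := c) (T := T) (i, j) with h | h | h
  exacts [Or.inl h, Or.inr h, by simp only at h; omega]

lemma slidePath_val_lt (hT : IsRectSYT r c T) {k : ℕ} (hk : k < r + c - 2) :
    T (slidePath r c T k).1 (slidePath r c T k).2 <
      T (slidePath r c T (k + 1)).1 (slidePath r c T (k + 1)).2 := by
  obtain ⟨hi, hj, -⟩ := slidePath_spec (T := T) hr hc k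
  rcases slidePath_succ_cases (T := T) hr hc hk rfl with ⟨he, hj', -⟩ | ⟨he, hi', -⟩ <;> rw [he]
  exacts [hT.1 _ _ hi hj', hT.2.1 _ _ hi' hj]

lemma promote_eq_slideEntry {i j : ℕ} (hij : (i, j) ≠ (r - 1, c - 1)) :
    promote r c T i j = slideEntry r c T i j - 1 := by
  rw [promote, if_neg (by rwa [slidePath_of_le hr hc (by omega)])]
  simp only [slideEntry, slideSource]
  split_ifs <;> rfl

lemma promote_corner : promote r c T (r - 1) (c - 1) = r * c := by
  rw [promote, if_pos (slidePath_of_le hr hc (by omega)).symm]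

lemma slideSource_slidePath {k : ℕ} (hk : k < r + c - 2) :
    slideSource r c T (slidePath r c T k) = slidePath r c T (k + 1) := by
  classical
  have hex : ∃ m, slidePath r c T m = slidePath r c T k := ⟨k, rfl⟩
  have hfind : Nat.find hex = k := by
    refine le_antisymm (Nat.find_min' hex rfl) (not_lt.1 fun hlt => ?_)
    have h1 := (slidePath_spec (T := T) hr hc (Nat.find hex)).2.2
    have h2 := (slidePath_spec (T := T) hr hc k).2.2
    rw [Nat.find_spec hex] at h1
    omega
  rw [slideSource, dif_pos hex, hfind]

lemma slidePath_cases {p : ℕ × ℕ} (hp : p ≠ (r - 1, c - 1)) :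
    (∀ k, slidePath r c T k ≠ p) ∨ ∃ k < r + c - 2, slidePath r c T k = p := by
  by_cases h : ∃ k, slidePath r c T k = p
  · obtain ⟨k, rfl⟩ := h
    exact Or.inr ⟨k, not_le.1 fun hle => hp (slidePath_of_le hr hc hle), rfl⟩
  · exact Or.inl fun k hk => h ⟨k, hk⟩

end Promotion

section PromoteIsRectSYT

variable {r c : ℕ} {T : ℕ → ℕ → ℕ} (hr : 0 < r) (hc : 0 < c)
include hr hc

lemma slideSource_spec {i j : ℕ} (hi : i < r) (hj : j < c) (hij : (i, j) ≠ (r - 1, c - 1)) :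
    (slideSource r c T (i, j)).1 < r ∧ (slideSource r c T (i, j)).2 < c ∧
      slideSource r c T (i, j) ≠ (0, 0) := by
  rcases slidePath_cases (T := T) hr hc hij with hoff | ⟨k, hk, hp⟩
  · rw [slideSource_of_forall_ne hoff]
    exact ⟨hi, hj, fun h => hoff 0 h.symm⟩
  · rw [← hp, slideSource_slidePath hr hc hk]
    obtain ⟨h1, h2, h3⟩ := slidePath_spec (T := T) hr hc (k + 1)
    exact ⟨h1, h2, fun h => by rw [h] at h3; simp only at h3; omega⟩

lemma exists_slideSource_eq {i j : ℕ} (hi : i < r) (hj : j < c) (h00 : (i, j) ≠ (0, 0)) :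
    ∃ q : ℕ × ℕ, q.1 < r ∧ q.2 < c ∧ q ≠ (r - 1, c - 1) ∧ slideSource r c T q = (i, j) ∧
      (q.1 = i ∨ ∃ k, slidePath r c T k = q ∧ slidePath r c T (k + 1) = (i, j) ∧
        (i, j) = (q.1 + 1, q.2)) := by
  by_cases hon : ∃ k, slidePath r c T k = (i, j)
  · obtain ⟨k, hk, hp⟩ : ∃ k, k < r + c - 2 ∧ slidePath r c T (k + 1) = (i, j) := by
      obtain ⟨k, hp⟩ := hon
      have hsum : i + j = min k (r + c - 2) := by
        simpa [hp] using (slidePath_spec (T := T) hr hc k).2.2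
      -- the path reaches `(i, j)` at time `i + j`
      have hp' : slidePath r c T (i + j) = (i, j) := by
        rcases le_total k (r + c - 2) with hk | hk
        · rwa [show i + j = k by omega]
        · rw [← hp, slidePath_of_le hr hc hk, slidePath_of_le hr hc (by omega)]
      have h0 : i + j ≠ 0 := fun h => h00 (by simp only [Prod.mk.injEq]; omega)
      exact ⟨i + j - 1, by omega, by rwa [Nat.sub_add_cancel (by omega)]⟩
    obtain ⟨g1, g2, -⟩ := slidePath_spec (T := T) hr hc k
    refine ⟨slidePath r c T k, g1, g2, slidePath_ne_corner hr hc hk,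
      by rw [slideSource_slidePath hr hc hk, hp], ?_⟩
    rcases slidePath_succ_cases (T := T) hr hc hk rfl with ⟨he, -⟩ | ⟨he, -⟩ <;> rw [hp] at he
    · exact Or.inl (congrArg Prod.fst he).symm
    · exact Or.inr ⟨k, rfl, hp, he⟩
  · simp only [not_exists] at hon
    exact ⟨(i, j), hi, hj, fun h => hon _ ((slidePath_of_le hr hc le_rfl).trans h.symm),
      slideSource_of_forall_ne hon, Or.inl rfl⟩

variable (hT : IsRectSYT r c T)
include hT

lemma le_slideEntry {i j : ℕ} (hij : (i, j) ≠ (r - 1, c - 1)) : T i j ≤ slideEntry r c T i j := by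
  rcases slidePath_cases (T := T) hr hc hij with hoff | ⟨k, hk, hp⟩
  · rw [slideEntry, slideSource_of_forall_ne hoff]
  · have := slidePath_val_lt hr hc hT hk
    rw [hp] at this
    rw [slideEntry, ← hp, slideSource_slidePath hr hc hk]
    exact this.le

lemma promote_mem_Ico {i j : ℕ} (hi : i < r) (hj : j < c) (hij : (i, j) ≠ (r - 1, c - 1)) :
    1 ≤ promote r c T i j ∧ promote r c T i j < r * c := by
  obtain ⟨h1, h2, h0⟩ := slideSource_spec (T := T) hr hc hi hj hij
  have hlt := hT.lt_of_le_of_le (i' := (slideSource r c T (i, j)).1)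
    (j' := (slideSource r c T (i, j)).2) (Nat.zero_le _) (Nat.zero_le _) (Ne.symm h0) h1 h2
  rw [hT.zero_zero hr hc] at hlt
  have hle := hT.le_card h1 h2
  rw [promote_eq_slideEntry hr hc hij]
  simp only [slideEntry]
  omega

lemma slideEntry_lt_right {i j : ℕ} (hi : i < r) (hj : j + 1 < c)
    (hne : (i, j + 1) ≠ (r - 1, c - 1)) : slideEntry r c T i j < slideEntry r c T i (j + 1) := by
  have hle := le_slideEntry hr hc hT hne
  rcases slidePath_cases (T := T) hr hc (p := (i, j))
    (fun h => by simp only [Prod.mk.injEq] at h; omega) with hoff | ⟨k, hk, hp⟩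
  · rw [slideEntry, slideSource_of_forall_ne hoff]
    exact (hT.1 i j hi hj).trans_le hle
  · rcases slidePath_succ_cases (T := T) hr hc hk hp with ⟨he, -⟩ | ⟨he, -, hlt⟩
    · have hk' : k + 1 < r + c - 2 :=
        not_le.1 fun h => hne (he.symm.trans (slidePath_of_le hr hc h))
      rw [slideEntry, slideEntry, ← hp, slideSource_slidePath hr hc hk, ← he,
        slideSource_slidePath hr hc hk']
      exact slidePath_val_lt hr hc hT hk'
    · rw [slideEntry, ← hp, slideSource_slidePath hr hc hk, he]
      exact (hlt hj).trans_le hle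

lemma slideEntry_lt_down {i j : ℕ} (hi : i + 1 < r) (hj : j < c)
    (hne : (i + 1, j) ≠ (r - 1, c - 1)) : slideEntry r c T i j < slideEntry r c T (i + 1) j := by
  have hle := le_slideEntry hr hc hT hne
  rcases slidePath_cases (T := T) hr hc (p := (i, j))
    (fun h => by simp only [Prod.mk.injEq] at h; omega) with hoff | ⟨k, hk, hp⟩
  · rw [slideEntry, slideSource_of_forall_ne hoff]
    exact (hT.2.1 i j hi hj).trans_le hle
  · rcases slidePath_succ_cases (T := T) hr hc hk hp with ⟨he, hj', hle'⟩ | ⟨he, -⟩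
    · rw [slideEntry, ← hp, slideSource_slidePath hr hc hk, he]
      -- entries are distinct, so the sliding rule `≤` is strict
      have hne' : T i (j + 1) ≠ T (i + 1) j := fun h' => by
        have := (hT.inj (by omega) hj' hi hj h').1; omega
      exact ((hle' hi).lt_of_ne hne').trans_le hle
    · have hk' : k + 1 < r + c - 2 :=
        not_le.1 fun h => hne (he.symm.trans (slidePath_of_le hr hc h))
      rw [slideEntry, slideEntry, ← hp, slideSource_slidePath hr hc hk, ← he,
        slideSource_slidePath hr hc hk']
      exact slidePath_val_lt hr hc hT hk'

theorem isRectSYT_promote : IsRectSYT r c (promote r c T) := by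
  have hcorner : ∀ {i j}, (i, j) = (r - 1, c - 1) → promote r c T i j = r * c := fun h => by
    rw [Prod.mk.injEq] at h; rw [h.1, h.2, promote_corner hr hc]
  refine ⟨fun i j hi hj => ?_, fun i j hi hj => ?_, fun i j hi hj => ?_, fun v hv1 hv2 => ?_⟩
  · have hne : (i, j) ≠ (r - 1, c - 1) := fun h => by simp only [Prod.mk.injEq] at h; omega
    by_cases hcor : (i, j + 1) = (r - 1, c - 1)
    · rw [hcorner hcor]; exact (promote_mem_Ico hr hc hT hi (by omega) hne).2
    · have := slideEntry_lt_right hr hc hT hi hj hcor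
      have := promote_mem_Ico hr hc hT hi (by omega) hne
      rw [promote_eq_slideEntry hr hc hne, promote_eq_slideEntry hr hc hcor] at *
      omega
  · have hne : (i, j) ≠ (r - 1, c - 1) := fun h => by simp only [Prod.mk.injEq] at h; omega
    by_cases hcor : (i + 1, j) = (r - 1, c - 1)
    · rw [hcorner hcor]; exact (promote_mem_Ico hr hc hT (by omega) hj hne).2
    · have := slideEntry_lt_down hr hc hT hi hj hcor
      have := promote_mem_Ico hr hc hT (by omega) hj hne
      rw [promote_eq_slideEntry hr hc hne, promote_eq_slideEntry hr hc hcor] at *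
      omega
  · by_cases hcor : (i, j) = (r - 1, c - 1)
    · rw [hcorner hcor]; exact ⟨Nat.mul_pos hr hc, le_rfl⟩
    · exact (promote_mem_Ico hr hc hT hi hj hcor).imp_right le_of_lt
  · rcases hv2.lt_or_eq with hv2 | rfl
    · obtain ⟨i, j, hi, hj, hv⟩ := hT.2.2.2 (v + 1) (by omega) (by omega)
      have h00 : (i, j) ≠ (0, 0) := fun h => by
        simp only [Prod.mk.injEq] at h; rw [h.1, h.2, hT.zero_zero hr hc] at hv; omega
      obtain ⟨q, hq1, hq2, hqc, hq, -⟩ := exists_slideSource_eq (T := T) hr hc hi hj h00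
      refine ⟨q.1, q.2, hq1, hq2, ?_⟩
      rw [promote_eq_slideEntry hr hc hqc, slideEntry, hq, hv, Nat.add_sub_cancel]
    · exact ⟨r - 1, c - 1, by omega, by omega, promote_corner hr hc⟩

end PromoteIsRectSYT

def IsArcClosed (M : Finset (ℕ × ℕ)) (a b : ℕ) : Prop :=
  ∀ p ∈ M, p.1 ∈ Finset.Icc a b ∨ p.2 ∈ Finset.Icc a b →
    p.1 ∈ Finset.Icc a b ∧ p.2 ∈ Finset.Icc a b

section Window

variable {r c : ℕ} {T : ℕ → ℕ → ℕ} {a b : ℕ}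

lemma rowCount_succ_le_of_isArcClosed (hT : IsRectSYT r c T) (hcl : IsArcClosed (mDiagram r c T) a b) {i v : ℕ}
    (hi : i + 1 < r) (hv : v ≤ b) :
    rowCount c (T (i + 1)) (a - 1) v ≤ rowCount c (T i) (a - 1) v := by
  have hP := hT.isStandardRowPair hi
  refine Finset.card_le_card_of_injOn (partnerCol c T i) (fun m hm => ?_)
    ((partnerCol_injOn hP).mono fun m hm => by simp_all)
  simp only [Finset.coe_filter, Finset.mem_range, Set.mem_ofPred_eq] at hm ⊢
  have hmem : (T i (partnerCol c T i m), T (i + 1) m) ∈ mDiagram r c T :=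
    mem_mDiagram.2 ⟨i, by omega, m, hm.1, rfl⟩
  have hopen : a ≤ T i (partnerCol c T i m) ∧ _ := Finset.mem_Icc.1 (hcl _ hmem
    (Or.inr (Finset.mem_Icc.2 (show a ≤ T (i + 1) m ∧ T (i + 1) m ≤ b by omega)))).1
  have := partnerCol_val_lt hP hm.1
  have := hT.one_le (i := i) (by omega) (partnerCol_lt hP hm.1)
  exact ⟨partnerCol_lt hP hm.1, by omega, by omega⟩

variable (hr : 0 < r) (hc : 0 < c) (hT : IsRectSYT r c T) (ha : 2 ≤ a)
include hr hc hT ha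

/-- Until the sliding path moves down onto an entry of `[a, b]`, it has, in its current row,
passed a column `j0` whose entry is below `a` and whose entry below is at least `a`. -/
lemma exists_col_of_slidePath (k : ℕ)
    (hno : ∀ m < k, ∀ i j, slidePath r c T m = (i, j) → slidePath r c T (m + 1) = (i + 1, j) →
      T (i + 1) j ∉ Finset.Icc a b)
    {i j : ℕ} (hp : slidePath r c T k = (i, j)) (hi : i + 1 < r) (hb : T i j ≤ b)
    (ha' : a ≤ T (i + 1) j) : ∃ j0 ≤ j, T i j0 < a ∧ a ≤ T (i + 1) j0 := by
  by_cases hij : T i j < a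
  · exact ⟨j, le_rfl, hij, ha'⟩
  induction k generalizing i j with
  | zero =>
    obtain ⟨rfl, rfl⟩ : 0 = i ∧ 0 = j := by simpa [slidePath] using hp
    rw [hT.zero_zero hr hc] at hij
    omega
  | succ k ih =>
    have hstep : slidePath r c T (k + 1) = slideNext r c T (slidePath r c T k) := rfl
    rcases hq : slidePath r c T k with ⟨i', j'⟩
    have hno' : ∀ m < k, _ := fun m hm => hno m (by omega)
    rcases slideNext_cases (r := r) (c := c) (T := T) (i', j') with
      ⟨he, hj', hcond⟩ | ⟨he, -⟩ | ⟨he, -⟩ <;>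
    rw [hstep, hq, he] at hp <;> simp only [Prod.mk.injEq] at hp <;> obtain ⟨rfl, rfl⟩ := hp
    · have := hT.1 i' j' (by omega) hj'
      by_cases hij' : T i' j' < a
      · exact ⟨j', by omega, hij', (not_lt.1 hij).trans (hcond hi)⟩
      obtain ⟨j0, hj0, h⟩ := ih hno' hq hi (by omega) ((not_lt.1 hij).trans (hcond hi)) hij'
      exact ⟨j0, by omega, h⟩
    · exact absurd (Finset.mem_Icc.2 ⟨not_lt.1 hij, hb⟩)
        (hno k (by omega) i' j' hq (hstep.trans (by rw [hq, he])))
    · exact ih hno' hq hi hb ha' hij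

/-- Otherwise, at the first such step, onto `v = T (i + 1) j`, row `i + 1` would have more
entries in `[a, v]` than row `i`, although each of them is matched to one of row `i` in
`[a, v]`. -/
lemma notMem_Icc_of_slidePath_down (hcl : IsArcClosed (mDiagram r c T) a b) (k : ℕ) :
    ∀ i j, slidePath r c T k = (i, j) → slidePath r c T (k + 1) = (i + 1, j) →
      T (i + 1) j ∉ Finset.Icc a b := by
  induction k using Nat.strong_induction_on with
  | _ k ih =>
  intro i j hp hdown hv
  rw [Finset.mem_Icc] at hv
  have hj : j < c := by simpa [hp] using (slidePath_spec (T := T) hr hc k).2.1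
  have hnext : slideNext r c T (i, j) = (i + 1, j) := by
    rw [← hp]; exact hdown
  obtain ⟨hi, hcond⟩ : i + 1 < r ∧ (j + 1 < c → T (i + 1) j < T i (j + 1)) := by
    rcases slideNext_cases (r := r) (c := c) (T := T) (i, j) with ⟨he, -⟩ | ⟨-, h⟩ | ⟨he, -⟩
    · rw [hnext] at he; simp at he
    · exact h
    · rw [hnext] at he; simp at he
  have hrow := hT.strictMonoOn_row (i := i) (by omega)
  have hrow' := hT.strictMonoOn_row hi
  obtain ⟨j0, hj0, hlt, hge⟩ := exists_col_of_slidePath hr hc hT ha k ih hp hi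
    (by have := hT.2.1 i j hi hj; omega) hv.1
  have hmore : rowCount c (T i) (a - 1) (T (i + 1) j) <
      rowCount c (T (i + 1)) (a - 1) (T (i + 1) j) := by
    refine Finset.card_lt_card ((Finset.ssubset_iff_of_subset fun t ht => ?_).2 ⟨j0, ?_, ?_⟩)
    · simp only [Finset.mem_filter, Finset.mem_range] at ht ⊢
      have htj : t ≤ j := by
        by_contra! htj
        have := hrow.monotoneOn (show j + 1 < c by omega) ht.1 htj
        have := hcond (by omega)
        omega
      have := hT.2.1 i t hi ht.1
      exact ⟨ht.1, by omega, hrow'.monotoneOn ht.1 hj htj⟩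
    · simp only [Finset.mem_filter, Finset.mem_range]
      exact ⟨by omega, by omega, hrow'.monotoneOn (show j0 < c by omega) hj hj0⟩
    · simp only [Finset.mem_filter, Finset.mem_range]
      omega
  exact (rowCount_succ_le_of_isArcClosed hT hcl hi hv.2).not_gt hmore

lemma exists_promote_eq_pred (hcl : IsArcClosed (mDiagram r c T) a b) {i j : ℕ} (hi : i < r)
    (hj : j < c) (hv : T i j ∈ Finset.Icc a b) : ∃ j' < c, promote r c T i j' = T i j - 1 := by
  rw [Finset.mem_Icc] at hv
  have h00 : (i, j) ≠ (0, 0) := fun h => by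
    simp only [Prod.mk.injEq] at h; rw [h.1, h.2, hT.zero_zero hr hc] at hv; omega
  obtain ⟨q, -, hq2, hqc, hq, hrow⟩ := exists_slideSource_eq (T := T) hr hc hi hj h00
  have hval : promote r c T q.1 q.2 = T i j - 1 := by
    rw [promote_eq_slideEntry hr hc hqc, slideEntry, hq]
  rcases hrow with hrow | ⟨k, hk, hk1, hij⟩
  · exact ⟨q.2, hq2, hrow ▸ hval⟩
  · refine absurd ?_ (notMem_Icc_of_slidePath_down hr hc hT ha hcl k q.1 q.2 hk (hk1.trans hij))
    simp only [Prod.mk.injEq] at hij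
    rw [← hij.1, ← hij.2]
    exact Finset.mem_Icc.2 hv

variable (hb : b ≤ r * c) (hcl : IsArcClosed (mDiagram r c T) a b)
include hb hcl

lemma exists_promote_eq_pred_iff {i v : ℕ} (hi : i < r) (hv : v ∈ Finset.Icc a b) :
    (∃ j < c, T i j = v) ↔ ∃ j < c, promote r c T i j = v - 1 := by
  rw [Finset.mem_Icc] at hv
  constructor
  · rintro ⟨j, hj, rfl⟩
    exact exists_promote_eq_pred hr hc hT ha hcl hi hj (Finset.mem_Icc.2 hv)
  · rintro ⟨j, hj, hval⟩
    obtain ⟨i0, j0, hi0, hj0, rfl⟩ := hT.2.2.2 v (by omega) (by omega)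
    obtain ⟨j1, hj1, hval1⟩ :=
      exists_promote_eq_pred hr hc hT ha hcl hi0 hj0 (Finset.mem_Icc.2 hv)
    obtain ⟨rfl, -⟩ := (isRectSYT_promote hr hc hT).inj hi0 hj1 hi hj (hval1.trans hval.symm)
    exact ⟨j0, hj0, rfl⟩

lemma rowCount_promote {i x v : ℕ} (hi : i < r) (hx : a - 1 ≤ x) (hv : v + 1 ≤ b) :
    rowCount c (promote r c T i) x v = rowCount c (T i) (x + 1) (v + 1) := by
  rw [rowCount_eq_card_filter_Ioc ((isRectSYT_promote hr hc hT).strictMonoOn_row hi).injOn,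
    rowCount_eq_card_filter_Ioc (hT.strictMonoOn_row hi).injOn, ← Finset.map_add_right_Ioc,
    Finset.filter_map, Finset.card_map]
  congr 1
  refine Finset.filter_congr fun u hu => ?_
  rw [Finset.mem_Ioc] at hu
  simpa using (exists_promote_eq_pred_iff hr hc hT ha hb hcl hi
    (v := u + 1) (Finset.mem_Icc.2 ⟨by omega, by omega⟩)).symm

lemma isBalanced_promote {i x y : ℕ} (hi : i + 1 < r) (hx : a ≤ x) (hy : y ≤ b)
    (h : IsBalanced c T i x y) : IsBalanced c (promote r c T) i (x - 1) (y - 1) := by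
  obtain ⟨hxy, heq, hpre⟩ := h
  have hcount : ∀ i' ≤ i + 1, ∀ v, v + 1 ≤ y - 1 →
      rowCount c (promote r c T i') (x - 1) v = rowCount c (T i') x (v + 1) := fun i' hi' v hv => by
    rw [rowCount_promote hr hc hT ha hb hcl (by omega) (by omega) (by omega),
      Nat.sub_add_cancel (by omega)]
  refine ⟨by omega, ?_, fun v hv => ?_⟩
  · rw [hcount i (Nat.le_succ i) _ (by omega), hcount (i + 1) le_rfl _ (by omega),
      show y - 1 - 1 + 1 = y - 1 by omega, heq]
  · rw [hcount i (Nat.le_succ i) _ (by omega), hcount (i + 1) le_rfl _ (by omega)]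
    exact hpre _ (by omega)

lemma pred_mem_mDiagram_promote {p : ℕ × ℕ} (hp : p ∈ mDiagram r c T) (h1 : p.1 ∈ Finset.Icc a b)
    (h2 : p.2 ∈ Finset.Icc a b) : (p.1 - 1, p.2 - 1) ∈ mDiagram r c (promote r c T) := by
  have hP := isRectSYT_promote hr hc hT
  obtain ⟨i, hi, m, hm, rfl⟩ := mem_mDiagram.1 hp
  rw [Finset.mem_Icc] at h1 h2
  have hpair := hT.isStandardRowPair (i := i) (by omega)
  have hpair' := hP.isStandardRowPair (i := i) (by omega)
  obtain ⟨m', hm', hclose⟩ := (exists_promote_eq_pred_iff hr hc hT ha hb hcl (i := i + 1)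
    (by omega) (Finset.mem_Icc.2 h2)).1 ⟨m, hm, rfl⟩
  obtain ⟨t, ht, hopen⟩ := (exists_promote_eq_pred_iff hr hc hT ha hb hcl (i := i)
    (by omega) (Finset.mem_Icc.2 h1)).1 ⟨_, partnerCol_lt hpair hm, rfl⟩
  have hbal := isBalanced_partnerCol hpair' hm'
  rw [hclose] at hbal
  have := hbal.unique hpair' ⟨_, partnerCol_lt hpair' hm', rfl⟩ ⟨t, ht, hopen⟩
    (isBalanced_promote hr hc hT ha hb hcl (by omega) h1.1 h2.2 (isBalanced_partnerCol hpair hm))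
  exact mem_mDiagram.2 ⟨i, hi, m', hm', by rw [this, hclose]⟩

lemma exists_mem_mDiagram_of_mem_promote {p' : ℕ × ℕ}
    (hp' : p' ∈ mDiagram r c (promote r c T))
    (htouch : p'.1 ∈ Finset.Icc (a - 1) (b - 1) ∨ p'.2 ∈ Finset.Icc (a - 1) (b - 1)) :
    ∃ p ∈ mDiagram r c T, p.1 ∈ Finset.Icc a b ∧ p.2 ∈ Finset.Icc a b ∧
      (p.1 - 1, p.2 - 1) = p' := by
  have hP := isRectSYT_promote hr hc hT
  suffices h : ∃ p ∈ mDiagram r c T,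
      (p.1 ∈ Finset.Icc a b ∧ p.1 - 1 = p'.1) ∨ (p.2 ∈ Finset.Icc a b ∧ p.2 - 1 = p'.2) by
    obtain ⟨p, hp, hshare⟩ := h
    have hin := hcl p hp (hshare.imp And.left And.left)
    have hmem := pred_mem_mDiagram_promote hr hc hT ha hb hcl hp hin.1 hin.2
    refine ⟨p, hp, hin.1, hin.2, ?_⟩
    rcases hshare with ⟨-, h⟩ | ⟨-, h⟩
    exacts [eq_of_mem_mDiagram_of_fst_eq hP hmem hp' h, eq_of_mem_mDiagram_of_snd_eq hP hmem hp' h]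
  obtain ⟨i, hi, m, hm, rfl⟩ := mem_mDiagram.1 hp'
  have hpair' := hP.isStandardRowPair (i := i) (by omega)
  rcases htouch with h | h <;> rw [Finset.mem_Icc] at h
  · obtain ⟨t, ht, hval⟩ := (exists_promote_eq_pred_iff hr hc hT ha hb hcl (i := i) (by omega)
      (Finset.mem_Icc.2 (show a ≤ promote r c T i (partnerCol c (promote r c T) i m) + 1 ∧ _ from
        ⟨by omega, by omega⟩))).2 ⟨_, partnerCol_lt hpair' hm, rfl⟩
    obtain ⟨p, hp, hp1⟩ := exists_mem_mDiagram_fst_eq hT hi ht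
    refine ⟨p, hp, Or.inl ⟨?_, ?_⟩⟩ <;> rw [hp1, hval]
    exacts [Finset.mem_Icc.2 ⟨by omega, by omega⟩, rfl]
  · obtain ⟨m0, hm0, hval⟩ := (exists_promote_eq_pred_iff hr hc hT ha hb hcl (i := i + 1)
      (by omega) (Finset.mem_Icc.2 (show a ≤ promote r c T (i + 1) m + 1 ∧ _ from
        ⟨by omega, by omega⟩))).2 ⟨m, hm, rfl⟩
    refine ⟨_, mem_mDiagram.2 ⟨i, hi, m0, hm0, rfl⟩, Or.inr ⟨?_, ?_⟩⟩ <;> simp only [hval]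
    exacts [Finset.mem_Icc.2 ⟨by omega, by omega⟩, rfl]

lemma isArcClosed_promote : IsArcClosed (mDiagram r c (promote r c T)) (a - 1) (b - 1) := by
  intro p' hp' htouch
  obtain ⟨p, -, h1, h2, rfl⟩ :=
    exists_mem_mDiagram_of_mem_promote hr hc hT ha hb hcl hp' htouch
  rw [Finset.mem_Icc] at h1 h2 ⊢
  exact ⟨⟨by omega, by omega⟩, by rw [Finset.mem_Icc]; omega⟩

end Window

section Subdiagram

variable {M C D : Finset (ℕ × ℕ)} {a b : ℕ}

lemma mem_endpoints {y : ℕ} : y ∈ endpoints C ↔ ∃ q ∈ C, q.1 = y ∨ q.2 = y := by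
  simp only [endpoints, Finset.mem_union, Finset.mem_image]
  constructor
  · rintro (⟨q, hq, rfl⟩ | ⟨q, hq, rfl⟩)
    exacts [⟨q, hq, Or.inl rfl⟩, ⟨q, hq, Or.inr rfl⟩]
  · rintro ⟨q, hq, rfl | rfl⟩
    exacts [Or.inl ⟨q, hq, rfl⟩, Or.inr ⟨q, hq, rfl⟩]

lemma endpoints_image_prodMap (f : ℕ → ℕ) :
    endpoints (C.image (Prod.map f f)) = (endpoints C).image f := by
  simp only [endpoints, Finset.image_union, Finset.image_image]
  rfl

lemma IsPreSubdiagram.mem_iff (hC : IsPreSubdiagram M C) (hepts : endpoints C = Finset.Icc a b)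
    {p : ℕ × ℕ} : p ∈ C ↔ p ∈ M ∧ (p.1 ∈ Finset.Icc a b ∨ p.2 ∈ Finset.Icc a b) := by
  refine ⟨fun hp => ⟨hC.1 hp, Or.inl (hepts ▸ mem_endpoints.2 ⟨p, hp, Or.inl rfl⟩)⟩, ?_⟩
  rintro ⟨hpM, hy | hy⟩ <;> rw [← hepts, mem_endpoints] at hy <;>
    obtain ⟨q, hq, hqy | hqy⟩ := hy <;>
    exact hC.2.2.1 p hpM q hq (by unfold SharesEndpoint; omega)

lemma IsPreSubdiagram.isArcClosed (hC : IsPreSubdiagram M C)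
    (hepts : endpoints C = Finset.Icc a b) : IsArcClosed M a b := fun p hpM hp => by
  have hpC := (hC.mem_iff hepts).2 ⟨hpM, hp⟩
  rw [← hepts]
  exact ⟨mem_endpoints.2 ⟨p, hpC, Or.inl rfl⟩, mem_endpoints.2 ⟨p, hpC, Or.inr rfl⟩⟩

/-- An arc sharing an endpoint with, or crossing, an arc inside `[a, b]` touches `[a, b]`. -/
lemma isPreSubdiagram_of_forall_mem_iff (hcl : IsArcClosed M a b) (hne : D.Nonempty)
    (hD : ∀ p, p ∈ D ↔ p ∈ M ∧ (p.1 ∈ Finset.Icc a b ∨ p.2 ∈ Finset.Icc a b)) :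
    IsPreSubdiagram M D := by
  have hin : ∀ q ∈ D, q.1 ∈ Finset.Icc a b ∧ q.2 ∈ Finset.Icc a b := fun q hq =>
    hcl q ((hD q).1 hq).1 ((hD q).1 hq).2
  refine ⟨fun p hp => ((hD p).1 hp).1, hne, fun p hpM q hq hshare => ?_,
    fun p hpM hpD q hq hcross => hpD ?_⟩ <;>
  · have hq := hin q hq
    simp only [Finset.mem_Icc] at hq
    refine (hD p).2 ⟨hpM, ?_⟩
    simp only [Finset.mem_Icc]
    first
    | (unfold SharesEndpoint at hshare; omega)
    | (unfold Crosses at hcross; omega)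

end Subdiagram

lemma rotArc_eq_of_ne_one {n : ℕ} {p : ℕ × ℕ} (h1 : p.1 ≠ 1) (h2 : p.2 ≠ 1) (hle : p.1 ≤ p.2) :
    rotArc n p = (p.1 - 1, p.2 - 1) := by
  simp only [rotArc, rotIdx, if_neg h1, if_neg h2]
  ext <;> simp only <;> omega

lemma endpoints_image_pred {C : Finset (ℕ × ℕ)} {a b : ℕ} (hepts : endpoints C = Finset.Icc a b)
    (hb : 1 ≤ b) :
    endpoints (C.image (Prod.map (· - 1) (· - 1))) = Finset.Icc (a - 1) (b - 1) := by
  rw [endpoints_image_prodMap, hepts]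
  ext y
  simp only [Finset.mem_image, Finset.mem_Icc]
  exact ⟨by rintro ⟨x, hx, rfl⟩; omega, fun hy => ⟨y + 1, by omega, by omega⟩⟩

section Rotation

variable {r c : ℕ} {T : ℕ → ℕ → ℕ} {C : Finset (ℕ × ℕ)}

lemma one_lt_of_mem_mDiagram {p : ℕ × ℕ} (hp : p ∈ mDiagram r c T) : 1 < r := by
  obtain ⟨i, hi, -⟩ := mem_mDiagram.1 hp
  omega

variable (hT : IsRectSYT r c T)
include hT

lemma mem_Icc_of_mem_endpoints (hC : C ⊆ mDiagram r c T) {y : ℕ} (hy : y ∈ endpoints C) :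
    y ∈ Finset.Icc 1 (r * c) := by
  obtain ⟨q, hq, hqy⟩ := mem_endpoints.1 hy
  obtain ⟨i, hi, m, hm, rfl⟩ := mem_mDiagram.1 (hC hq)
  have hpc := partnerCol_lt (hT.isStandardRowPair (i := i) (by omega)) hm
  rw [Finset.mem_Icc]
  rcases hqy with rfl | rfl
  exacts [⟨hT.one_le (by omega) hpc, hT.le_card (by omega) hpc⟩,
    ⟨hT.one_le (by omega) hm, hT.le_card (by omega) hm⟩]

lemma bounds_of_endpoints_eq_Icc {a b : ℕ} (hC : IsPreSubdiagram (mDiagram r c T) C)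
    (hepts : endpoints C = Finset.Icc a b) (h1 : 1 ∉ endpoints C) :
    2 ≤ a ∧ a ≤ b ∧ b ≤ r * c := by
  obtain ⟨q, hq⟩ := hC.2.1
  have hq1 : q.1 ∈ Finset.Icc a b := hepts ▸ mem_endpoints.2 ⟨q, hq, Or.inl rfl⟩
  rw [Finset.mem_Icc] at hq1
  have ha := mem_Icc_of_mem_endpoints hT hC.1 (y := a) (hepts ▸ Finset.mem_Icc.2 ⟨le_rfl, by omega⟩)
  have hb := mem_Icc_of_mem_endpoints hT hC.1 (y := b) (hepts ▸ Finset.mem_Icc.2 ⟨by omega, le_rfl⟩)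
  have ha1 : a ≠ 1 := fun h => h1 (hepts ▸ Finset.mem_Icc.2 ⟨by omega, by omega⟩)
  rw [Finset.mem_Icc] at ha hb
  omega

lemma image_rotArc_eq (hC : C ⊆ mDiagram r c T) (h1 : 1 ∉ endpoints C) (n : ℕ) :
    C.image (rotArc n) = C.image (Prod.map (· - 1) (· - 1)) :=
  Finset.image_congr fun p hp => rotArc_eq_of_ne_one
    (fun h => h1 (mem_endpoints.2 ⟨p, hp, Or.inl h⟩))
    (fun h => h1 (mem_endpoints.2 ⟨p, hp, Or.inr h⟩))
    (fst_lt_snd_of_mem_mDiagram hT (hC hp)).le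

lemma ne_mDiagram_of_endpoints_eq {D : Finset (ℕ × ℕ)} {a b : ℕ} (hr : 1 < r) (hc : 0 < c)
    (hepts : endpoints D = Finset.Icc a b) (hb : b < r * c) : D ≠ mDiagram r c T := by
  rintro rfl
  have hcorner : T (r - 2 + 1) (c - 1) ∈ endpoints (mDiagram r c T) :=
    mem_endpoints.2 ⟨_, mem_mDiagram.2 ⟨r - 2, by omega, c - 1, by omega, rfl⟩, Or.inr rfl⟩
  rw [hepts, show r - 2 + 1 = r - 1 by omega, hT.corner (by omega) hc, Finset.mem_Icc] at hcorner
  omega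

lemma mem_image_pred_iff (hr : 0 < r) (hc : 0 < c) {a b : ℕ}
    (hC : IsPreSubdiagram (mDiagram r c T) C) (hepts : endpoints C = Finset.Icc a b)
    (ha : 2 ≤ a) (hb : b ≤ r * c) (p' : ℕ × ℕ) :
    p' ∈ C.image (Prod.map (· - 1) (· - 1)) ↔ p' ∈ mDiagram r c (promote r c T) ∧
      (p'.1 ∈ Finset.Icc (a - 1) (b - 1) ∨ p'.2 ∈ Finset.Icc (a - 1) (b - 1)) := by
  have hcl := hC.isArcClosed hepts
  constructor
  · intro hp'
    obtain ⟨p, hp, rfl⟩ := Finset.mem_image.1 hp'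
    have ⟨h1, h2⟩ := hcl p (hC.1 hp) ((hC.mem_iff hepts).1 hp).2
    refine ⟨pred_mem_mDiagram_promote hr hc hT ha hb hcl (hC.1 hp) h1 h2, Or.inl ?_⟩
    simp only [Finset.mem_Icc, Prod.map_fst] at h1 ⊢
    omega
  · rintro ⟨hp', htouch⟩
    obtain ⟨p, hp, h1, -, rfl⟩ :=
      exists_mem_mDiagram_of_mem_promote hr hc hT ha hb hcl hp' htouch
    exact Finset.mem_image.2 ⟨p, (hC.mem_iff hepts).2 ⟨hp, Or.inl h1⟩, rfl⟩

end Rotation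

/-- If `C` is a uniform sub-diagram of `φ(T)` whose endpoints do not contain the
vertex `1`, then `ρ(C)` is a uniform sub-diagram of `φ(P(T))`. -/
theorem rotation_of_uniform_subdiagram (r c : ℕ) (T : ℕ → ℕ → ℕ)
    (hr : 0 < r) (hc : 0 < c) (hT : IsRectSYT r c T)
    (C : Finset (ℕ × ℕ))
    (hsub : IsSubdiagram (mDiagram r c T) C)
    (huni : IsUniform C)
    (h1 : 1 ∉ endpoints C) :
    IsSubdiagram (mDiagram r c (promote r c T)) (C.image (rotArc (r * c))) ∧
    IsUniform (C.image (rotArc (r * c))) := by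
  obtain ⟨hC, -⟩ := hsub
  obtain ⟨a, b, hepts⟩ := huni
  obtain ⟨ha, hab, hb⟩ := bounds_of_endpoints_eq_Icc hT hC hepts h1
  obtain ⟨q, hq⟩ := hC.2.1
  have hepts' := endpoints_image_pred hepts (by omega)
  rw [image_rotArc_eq hT hC.1 h1]
  refine ⟨⟨isPreSubdiagram_of_forall_mem_iff
    (isArcClosed_promote hr hc hT ha hb (hC.isArcClosed hepts)) (hC.2.1.image _)
    (mem_image_pred_iff hT hr hc hC hepts ha hb), ?_⟩, a - 1, b - 1, hepts'⟩
  exact ne_mDiagram_of_endpoints_eq (isRectSYT_promote hr hc hT)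
    (one_lt_of_mem_mDiagram (hC.1 hq)) hc hepts' (by omega)
end
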